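/- arXiv:1603.03474 — 2 statements merged into one kernel-verified Lean document; each statement's English description precedes it below -/
import Mathlib

section
/- Let d > 0 and set c0 = 1/4. Suppose an estimate L̂ ∈ ℝ and vectors b̂, b*, b in a normed space satisfy ‖b̂ − b*‖ ≤ c0·d, |L̂ − ‖b̂ − b*‖²| ≤ d²/4, and ‖b − b*‖ ≥ d. Then |L̂ − ‖b̂ − b‖²| ≥ (1 − 2c0 − 1/4)·d² = d²/4. -/
/-- Key deterministic step in the loss-estimation lower bound: with c0 = 1/4, accuracy of the
loss estimator at the null point forces a large error at alternatives. -/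
theorem loss_estimator_error_lower_bound {V : Type*} [NormedAddCommGroup V] [NormedSpace ℝ V]
    (bhat bstar b : V) (Lhat d : ℝ) (hd : 0 < d)
    (h1 : ‖bhat - bstar‖ ≤ (1 / 4) * d)
    (h2 : |Lhat - ‖bhat - bstar‖ ^ 2| ≤ d ^ 2 / 4)
    (h3 : ‖b - bstar‖ ≥ d) :
    |Lhat - ‖bhat - b‖ ^ 2| ≥ d ^ 2 / 4 := by
  have htri : ‖b - bstar‖ ≤ ‖b - bhat‖ + ‖bhat - bstar‖ := norm_sub_le_norm_sub_add_norm_sub _ _ _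
  have hb : ‖bhat - b‖ ≥ (3 / 4) * d := by
    rw [norm_sub_rev]
    linarith
  have hsq : ‖bhat - b‖ ^ 2 ≥ (9 / 16) * d ^ 2 := by
    have := mul_le_mul hb hb (by positivity) (norm_nonneg _)
    nlinarith
  have hnn : (0:ℝ) ≤ ‖bhat - bstar‖ := norm_nonneg _
  have hsq2 : ‖bhat - bstar‖ ^ 2 ≤ (1 / 16) * d ^ 2 := by nlinarith
  have h2' := abs_le.mp h2
  rw [ge_iff_le, le_abs]
  right
  nlinarith [h2'.1, h2'.2]
end

section
/- If two product probability measures are formed from densities f and g, then the chi-square divergence tensorizes: χ²(f^{⊗n}, g^{⊗n}) = (1 + χ²(f, g))^n − 1. -/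
open MeasureTheory ENNReal

/-- The lintegral of a product of coordinatewise functions over a `Fin n`-indexed
pi measure is the `n`-th power of the lintegral. -/
lemma lintegral_pi_prod_aux {α : Type*} [MeasurableSpace α] (μ : Measure α) [SigmaFinite μ]
    (h : α → ℝ≥0∞) (hm : Measurable h) :
    ∀ n : ℕ, (∫⁻ x : Fin n → α, ∏ i, h (x i) ∂(Measure.pi fun _ => μ))
      = (∫⁻ a, h a ∂μ) ^ n := by
  intro n
  induction n with
  | zero =>
      simp only [Finset.univ_eq_empty, Finset.prod_empty, lintegral_const, one_mul, pow_zero]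
      rw [Measure.pi_univ]
      simp
  | succ n ih =>
      have hF : Measurable fun z : α × (Fin n → α) => h z.1 * ∏ j, h (z.2 j) :=
        (hm.comp measurable_fst).mul
          (Finset.measurable_prod _ fun j _ =>
            hm.comp ((measurable_pi_apply j).comp measurable_snd))
      have hprod : Measurable fun y : Fin n → α => ∏ j, h (y j) :=
        Finset.measurable_prod _ fun j _ => hm.comp (measurable_pi_apply j)
      have hmp := measurePreserving_piFinSuccAbove (fun _ : Fin (n + 1) => μ) 0
      have heq := hmp.lintegral_comp hF
      have key : (∫⁻ x : Fin (n + 1) → α, ∏ i, h (x i) ∂(Measure.pi fun _ => μ))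
          = ∫⁻ z : α × (Fin n → α), h z.1 * ∏ j, h (z.2 j)
              ∂(μ.prod (Measure.pi fun _ : Fin n => μ)) := by
        rw [← heq]
        refine lintegral_congr fun x => ?_
        rw [Fin.prod_univ_succ]
        rfl
      rw [key, lintegral_prod_mul hm.aemeasurable hprod.aemeasurable, ih, pow_succ, mul_comm]

/-- Chi-square divergence tensorizes over products:
χ²(f^{⊗n}, g^{⊗n}) = (1 + χ²(f,g))^n − 1. -/
theorem chiSq_tensorization {α : Type*} [MeasurableSpace α] (μ : Measure α) [SigmaFinite μ]
    (n : ℕ) (f g : α → ℝ≥0∞) (hf : Measurable f) (hg : Measurable g)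
    (hf1 : ∫⁻ a, f a ∂μ = 1) (hg1 : ∫⁻ a, g a ∂μ = 1)
    (hgpos : ∀ᵐ a ∂μ, 0 < g a) :
    (∫⁻ x : Fin n → α, (∏ i, f (x i)) ^ 2 / (∏ i, g (x i)) ∂(Measure.pi fun _ => μ)) - 1
      = (1 + ((∫⁻ a, f a ^ 2 / g a ∂μ) - 1)) ^ n - 1 := by
  set I := ∫⁻ a, f a ^ 2 / g a ∂μ with hI
  -- Step 1 : I ≥ 1 via the pointwise AM-GM inequality 2f ≤ f²/g + g.
  have hpt : ∀ᵐ a ∂μ, 2 * f a ≤ f a ^ 2 / g a + g a := by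
    filter_upwards [hgpos] with a hga
    rcases eq_or_ne (g a) ∞ with hgt | hgt
    · simp [hgt]
    rcases eq_or_ne (f a) ∞ with hft | hft
    · have : f a ^ 2 / g a = ∞ := by
        rw [hft]
        simp [ENNReal.div_eq_top, hgt, (pow_eq_top_iff.mpr ⟨rfl, two_ne_zero⟩ : (∞:ℝ≥0∞)^2 = ∞)]
      simp [this]
    · -- both finite, g a ≠ 0
      have hg0 : g a ≠ 0 := hga.ne'
      have hmul : 2 * f a * g a ≤ f a ^ 2 + g a ^ 2 := by
        obtain ⟨p, hp⟩ : ∃ p : NNReal, f a = p := ⟨(f a).toNNReal, (ENNReal.coe_toNNReal hft).symm⟩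
        obtain ⟨q, hq⟩ : ∃ q : NNReal, g a = q := ⟨(g a).toNNReal, (ENNReal.coe_toNNReal hgt).symm⟩
        rw [hp, hq, ← ENNReal.coe_ofNat, ← ENNReal.coe_mul, ← ENNReal.coe_mul, ← ENNReal.coe_pow,
          ← ENNReal.coe_pow, ← ENNReal.coe_add, ENNReal.coe_le_coe, ← NNReal.coe_le_coe]
        push_cast
        nlinarith [sq_nonneg ((p : ℝ) - (q : ℝ))]
      calc 2 * f a = 2 * f a * g a / g a := by
            rw [mul_div_assoc, ENNReal.div_self hg0 hgt, mul_one]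
        _ ≤ (f a ^ 2 + g a ^ 2) / g a := by
            exact ENNReal.div_le_div_right hmul _
        _ = f a ^ 2 / g a + g a ^ 2 / g a := by
            rw [ENNReal.add_div]
        _ = f a ^ 2 / g a + g a := by
            rw [sq (g a), mul_div_assoc, ENNReal.div_self hg0 hgt, mul_one]
  have hImeas : Measurable fun a => f a ^ 2 / g a := (hf.pow_const 2).div hg
  have hI1 : 1 ≤ I := by
    have h2 : (2 : ℝ≥0∞) ≤ I + 1 := by
      have := lintegral_mono_ae hpt
      rwa [lintegral_const_mul 2 hf, hf1, mul_one,
        lintegral_add_right _ hg, hg1, ← hI] at this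
    have : (1 : ℝ≥0∞) + 1 ≤ I + 1 := by
      convert h2 using 1
      norm_num
    exact (ENNReal.add_le_add_iff_right one_ne_top).mp this
  -- Step 2 : the integrand factors a.e.
  have hnull : ∀ i : Fin n, (Measure.pi fun _ : Fin n => μ)
      {x : Fin n → α | ¬ 0 < g (x i)} = 0 := by
    intro i
    have hμ : μ {a : α | ¬ 0 < g a} = 0 := hgpos
    have : {x : Fin n → α | ¬ 0 < g (x i)}
        = Function.eval i ⁻¹' {a : α | ¬ 0 < g a} := rfl
    rw [this]
    exact Measure.pi_eval_preimage_null _ hμ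
  have hae : ∀ᵐ x : Fin n → α ∂(Measure.pi fun _ : Fin n => μ), ∀ i, 0 < g (x i) := by
    rw [ae_all_iff]
    intro i
    exact hnull i
  have hfactor : ∀ᵐ x : Fin n → α ∂(Measure.pi fun _ : Fin n => μ),
      (∏ i, f (x i)) ^ 2 / (∏ i, g (x i)) = ∏ i, f (x i) ^ 2 / g (x i) := by
    filter_upwards [hae] with x hx
    have hg0 : ∀ i : Fin n, g (x i) ≠ 0 := fun i => (hx i).ne'
    rw [div_eq_mul_inv, ENNReal.prod_inv_distrib (fun i _ j _ _ => Or.inl (hg0 i)),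
      ← Finset.prod_pow, ← Finset.prod_mul_distrib]
    exact Finset.prod_congr rfl fun i _ => (div_eq_mul_inv _ _).symm
  have hint : (∫⁻ x : Fin n → α, (∏ i, f (x i)) ^ 2 / (∏ i, g (x i))
      ∂(Measure.pi fun _ => μ)) = I ^ n := by
    rw [lintegral_congr_ae hfactor]
    exact lintegral_pi_prod_aux μ _ hImeas n
  rw [hint, add_tsub_cancel_of_le hI1]
end
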